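/- Suppose the irreducibility hypothesis (I) holds. Then, almost surely, the limit set C_∞ = ∪_{m≥0} C_m of the IDLA clusters equals all of ℤ. -/

import Mathlib

open MeasureTheory ProbabilityTheory Filter Topology Set

noncomputable section

namespace IDLAPaper

variable {Ω : Type*}

/-- The `m`-th walker (0-indexed), started at `0`, with increments `ξ (m, ·)`. -/
def walkOf (ξ : ℕ × ℕ → Ω → ℤ) (m n : ℕ) (ω : Ω) : ℤ :=
  ∑ i ∈ Finset.range n, ξ (m, i) ω

/-- The IDLA clusters: `cluster ξ ω m` is the cluster after `m` walkers have been dispatched.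
The `(m+1)`-st cluster is obtained by adding the first site outside the current cluster
visited by the `m`-th walker (0-indexed). -/
def cluster (ξ : ℕ × ℕ → Ω → ℤ) (ω : Ω) : ℕ → Set ℤ
  | 0 => {0}
  | m + 1 =>
      cluster ξ ω m ∪
        {walkOf ξ m (sInf {n : ℕ | walkOf ξ m n ω ∉ cluster ξ ω m}) ω}

/-- The inner radius `r_m`: the radius of the maximal centred interval inside the cluster. -/
def innerRadius (ξ : ℕ × ℕ → Ω → ℤ) (ω : Ω) (m : ℕ) : ℕ :=
  sSup {r : ℕ | ∀ z : ℤ, |z| ≤ (r : ℤ) → z ∈ cluster ξ ω m}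

/-- The coverage time `σ_x = inf { m : r_m ≥ x }`. -/
def covTime (ξ : ℕ × ℕ → Ω → ℤ) (ω : Ω) (x : ℝ) : ℕ :=
  sInf {m : ℕ | x ≤ (innerRadius ξ ω m : ℝ)}

/-- The whole array of increments is i.i.d. under `P`. -/
def IsIID [MeasurableSpace Ω] (P : Measure Ω) (ξ : ℕ × ℕ → Ω → ℤ) : Prop :=
  (∀ p, Measurable (ξ p)) ∧ iIndepFun ξ P ∧
    ∀ p, Measure.map (ξ p) P = Measure.map (ξ (0, 0)) P

/-- Hypothesis (I): irreducibility of the driving random walk on `ℤ`. -/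
def HypI [MeasurableSpace Ω] (P : Measure Ω) (ξ : ℕ × ℕ → Ω → ℤ) : Prop :=
  ∀ x y : ℤ, ∃ n : ℕ, 0 < n ∧ 0 < P {ω | x + walkOf ξ 0 n ω = y}

/-- Hypothesis (S_α): symmetric increments in the domain of normal attraction of a
symmetric `α`-stable law, stated via the characteristic function. -/
def HypS [MeasurableSpace Ω] (P : Measure Ω) (ξ : ℕ × ℕ → Ω → ℤ) (α : ℝ) : Prop :=
  Measure.map (fun ω => -ξ (0, 0) ω) P = Measure.map (ξ (0, 0)) P ∧
    ∃ β : ℝ, 0 < β ∧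
      Tendsto (fun t : ℝ =>
          ((|t| ^ (-α) : ℝ) : ℂ) *
            (1 - ∫ ω, Complex.exp (Complex.I * (t : ℂ) * ((ξ (0, 0) ω : ℤ) : ℂ)) ∂P))
        (𝓝[≠] (0 : ℝ)) (𝓝 ((β : ℝ) : ℂ))

/-!
Fix `z ∈ ℤ`. By irreducibility some path of `n` steps from `0` to `z` has positive probability,
and by independence and the second Borel–Cantelli lemma infinitely many walkers start by
following it. If `z` were never occupied, each of these walkers would leave the current cluster
no later than at time `n`, hence settle on one of the finitely many sites of the path. But two
escaping walkers never settle on the same site, since the later one starts from a cluster that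
already contains the earlier one's site.
-/

/-- Junk value `0` when walker `m` never leaves the cluster. -/
def exitTime (ξ : ℕ × ℕ → Ω → ℤ) (ω : Ω) (m : ℕ) : ℕ :=
  sInf {n : ℕ | walkOf ξ m n ω ∉ cluster ξ ω m}

section Deterministic

variable {ξ : ℕ × ℕ → Ω → ℤ} {ω : Ω}

lemma cluster_succ (m : ℕ) :
    cluster ξ ω (m + 1) = cluster ξ ω m ∪ {walkOf ξ m (exitTime ξ ω m) ω} :=
  rfl

lemma cluster_mono : Monotone (cluster ξ ω) :=
  monotone_nat_of_le_succ fun m => by rw [cluster_succ]; exact subset_union_left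

lemma exitTime_le {m n : ℕ} (h : walkOf ξ m n ω ∉ cluster ξ ω m) : exitTime ξ ω m ≤ n :=
  Nat.sInf_le h

lemma walkOf_exitTime_notMem_cluster {m n : ℕ} (h : walkOf ξ m n ω ∉ cluster ξ ω m) :
    walkOf ξ m (exitTime ξ ω m) ω ∉ cluster ξ ω m :=
  Nat.sInf_mem (s := {n | walkOf ξ m n ω ∉ cluster ξ ω m}) ⟨n, h⟩

lemma walkOf_exitTime_mem_cluster_succ (m : ℕ) :
    walkOf ξ m (exitTime ξ ω m) ω ∈ cluster ξ ω (m + 1) := by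
  rw [cluster_succ]; exact Or.inr rfl

lemma injOn_walkOf_exitTime :
    InjOn (fun m => walkOf ξ m (exitTime ξ ω m) ω)
      {m | ∃ n, walkOf ξ m n ω ∉ cluster ξ ω m} := by
  intro m hm m' hm' heq
  dsimp only at heq
  by_contra hne
  wlog hlt : m < m' generalizing m m'
  · exact this hm' hm heq.symm (Ne.symm hne) (by omega)
  obtain ⟨n', hn'⟩ := hm'
  exact walkOf_exitTime_notMem_cluster hn'
    (heq ▸ cluster_mono hlt (walkOf_exitTime_mem_cluster_succ m))

lemma walkOf_eq_of_forall_lt_eq {m m' n : ℕ} {ω' : Ω}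
    (h : ∀ i < n, ξ (m, i) ω = ξ (m', i) ω') {k : ℕ} (hk : k ≤ n) :
    walkOf ξ m k ω = walkOf ξ m' k ω' :=
  Finset.sum_congr rfl fun i hi => h i ((Finset.mem_range.1 hi).trans_le hk)

theorem mem_iUnion_cluster_of_frequently_walkOf_eq {γ : ℕ → ℤ} {n : ℕ}
    (h : ∃ᶠ m in atTop, ∀ k ≤ n, walkOf ξ m k ω = γ k) :
    γ n ∈ ⋃ m, cluster ξ ω m := by
  by_contra hγ
  simp only [mem_iUnion, not_exists] at hγ
  set S := {m | ∀ k ≤ n, walkOf ξ m k ω = γ k}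
  have hescape : ∀ m ∈ S, walkOf ξ m n ω ∉ cluster ξ ω m := fun m hm =>
    (hm n le_rfl).symm ▸ hγ m
  have hmaps : MapsTo (fun m => walkOf ξ m (exitTime ξ ω m) ω) S (γ '' Iic n) :=
    fun m hm => by
      have hle := exitTime_le (hescape m hm)
      simpa only [hm _ hle] using mem_image_of_mem γ (mem_Iic.2 hle)
  have hinj : InjOn (fun m => walkOf ξ m (exitTime ξ ω m) ω) S :=
    injOn_walkOf_exitTime.mono fun m hm => mem_ofPred.2 ⟨n, hescape m hm⟩
  exact infinite_of_injOn_mapsTo hinj hmaps (Nat.frequently_atTop_iff_infinite.1 h)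
    ((finite_Iic n).image γ)

end Deterministic

def firstStepsEq (ξ : ℕ × ℕ → Ω → ℤ) (n : ℕ) (v : ℕ → ℤ) (m : ℕ) : Set Ω :=
  {ω | ∀ i < n, ξ (m, i) ω = v i}

lemma firstStepsEq_eq_biInter {ξ : ℕ × ℕ → Ω → ℤ} (n : ℕ) (v : ℕ → ℤ) (m : ℕ) :
    firstStepsEq ξ n v m = ⋂ i ∈ Finset.range n, ξ (m, i) ⁻¹' {v i} := by
  ext ω; simp [firstStepsEq]

section Probabilistic

variable [MeasurableSpace Ω] {P : Measure Ω}

lemma exists_mem_measure_fiber_ne_zero {α : Type*} [Countable α] (Y : Ω → α) {s : Set Ω}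
    (hs : P s ≠ 0) : ∃ ω ∈ s, P (Y ⁻¹' {Y ω}) ≠ 0 := by
  by_contra! h
  refine hs (measure_mono_null (t := ⋃ a : Y '' s, Y ⁻¹' {(a : α)}) ?_ (measure_iUnion_null ?_))
  · exact fun ω hω => mem_iUnion.2 ⟨⟨Y ω, ω, hω, rfl⟩, rfl⟩
  · rintro ⟨_, ω, hω, rfl⟩
    exact h ω hω

lemma ae_frequently_mem_of_iIndepSet {A : ℕ → Set Ω} (hmeas : ∀ m, MeasurableSet (A m))
    (hind : iIndepSet A P) (hP : ∀ m, P (A m) = P (A 0)) (h0 : P (A 0) ≠ 0) :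
    ∀ᵐ ω ∂P, ∃ᶠ m in atTop, ω ∈ A m := by
  have := hind.isProbabilityMeasure
  have hlimsup : P (limsup A atTop) = 1 :=
    measure_limsup_eq_one hmeas hind
      (by rw [tsum_congr hP]; exact ENNReal.tsum_const_eq_top_of_ne_zero h0)
  have hae : ∀ᵐ ω ∂P, ω ∈ limsup A atTop :=
    (ae_iff_measure_eq (MeasurableSet.measurableSet_limsup hmeas).nullMeasurableSet).2
      (by rw [measure_univ]; exact hlimsup)
  exact hae.mono fun ω hω => mem_limsup_iff_frequently_mem.1 hω

variable {ξ : ℕ × ℕ → Ω → ℤ}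

namespace IsIID

variable (hiid : IsIID P ξ)
include hiid

lemma measure_preimage_singleton (p : ℕ × ℕ) (y : ℤ) :
    P (ξ p ⁻¹' {y}) = P (ξ (0, 0) ⁻¹' {y}) := by
  obtain ⟨hmeas, -, hid⟩ := hiid
  rw [← Measure.map_apply (hmeas p) (measurableSet_singleton _), hid p,
    Measure.map_apply (hmeas (0, 0)) (measurableSet_singleton _)]

lemma measurableSet_firstStepsEq (n : ℕ) (v : ℕ → ℤ) (m : ℕ) :
    MeasurableSet (firstStepsEq ξ n v m) := by
  rw [firstStepsEq_eq_biInter]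
  exact Finset.measurableSet_biInter _ fun i _ => hiid.1 (m, i) (measurableSet_singleton _)

lemma measure_biInter_firstStepsEq (n : ℕ) (v : ℕ → ℤ) (S : Finset ℕ) :
    P (⋂ m ∈ S, firstStepsEq ξ n v m) = ∏ _m ∈ S, ∏ i ∈ Finset.range n, P (ξ (0, 0) ⁻¹' {v i}) := by
  have hset : (⋂ m ∈ S, firstStepsEq ξ n v m) = ⋂ p ∈ S ×ˢ Finset.range n, ξ p ⁻¹' {v p.2} := by
    ext ω
    simp only [firstStepsEq, mem_iInter, mem_ofPred_eq, Finset.mem_product, Finset.mem_range,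
      mem_preimage, mem_singleton_iff, Prod.forall, and_imp]
    exact ⟨fun h a b ha hb => h a ha b hb, fun h a ha b hb => h a b ha hb⟩
  rw [hset, hiid.2.1.measure_inter_preimage_eq_mul _ fun p _ => measurableSet_singleton _,
    Finset.prod_product]
  exact Finset.prod_congr rfl fun m _ => Finset.prod_congr rfl fun i _ =>
    hiid.measure_preimage_singleton (m, i) (v i)

lemma measure_firstStepsEq (n : ℕ) (v : ℕ → ℤ) (m : ℕ) :
    P (firstStepsEq ξ n v m) = ∏ i ∈ Finset.range n, P (ξ (0, 0) ⁻¹' {v i}) := by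
  simpa using hiid.measure_biInter_firstStepsEq n v {m}

lemma iIndepSet_firstStepsEq (n : ℕ) (v : ℕ → ℤ) : iIndepSet (firstStepsEq ξ n v) P :=
  (iIndepSet_iff_meas_biInter (hiid.measurableSet_firstStepsEq n v)).2 fun S => by
    simp only [hiid.measure_biInter_firstStepsEq, hiid.measure_firstStepsEq]

lemma ae_frequently_mem_firstStepsEq (n : ℕ) (v : ℕ → ℤ) (h0 : P (firstStepsEq ξ n v 0) ≠ 0) :
    ∀ᵐ ω ∂P, ∃ᶠ m in atTop, ω ∈ firstStepsEq ξ n v m :=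
  ae_frequently_mem_of_iIndepSet (hiid.measurableSet_firstStepsEq n v)
    (hiid.iIndepSet_firstStepsEq n v)
    (fun m => by simp only [hiid.measure_firstStepsEq]) h0

end IsIID

lemma exists_measure_firstStepsEq_ne_zero {n : ℕ} {z : ℤ}
    (hpos : P {ω | walkOf ξ 0 n ω = z} ≠ 0) :
    ∃ ω₀, walkOf ξ 0 n ω₀ = z ∧ P (firstStepsEq ξ n (fun i => ξ (0, i) ω₀) 0) ≠ 0 := by
  obtain ⟨ω₀, hz, hω₀⟩ :=
    exists_mem_measure_fiber_ne_zero (fun ω (i : Fin n) => ξ (0, i) ω) hpos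
  have hsub : (fun ω (i : Fin n) => ξ (0, i) ω) ⁻¹' {fun (i : Fin n) => ξ (0, i) ω₀} ⊆
      firstStepsEq ξ n (fun i => ξ (0, i) ω₀) 0 :=
    fun ω hω i hi => congrFun hω ⟨i, hi⟩
  exact ⟨ω₀, hz, fun h => hω₀ (measure_mono_null hsub h)⟩

end Probabilistic

theorem idla_fills_Z_general
    [MeasurableSpace Ω] (P : Measure Ω)
    (ξ : ℕ × ℕ → Ω → ℤ) (hiid : IsIID P ξ) (hI : HypI P ξ) :
    ∀ᵐ ω ∂P, (⋃ m : ℕ, cluster ξ ω m) = Set.univ := by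
  have hsite : ∀ z : ℤ, ∀ᵐ ω ∂P, z ∈ ⋃ m, cluster ξ ω m := by
    intro z
    obtain ⟨n, -, hpos⟩ := hI 0 z
    simp only [zero_add] at hpos
    obtain ⟨ω₀, rfl, hω₀⟩ := exists_measure_firstStepsEq_ne_zero hpos.ne'
    filter_upwards [hiid.ae_frequently_mem_firstStepsEq n _ hω₀] with ω hω
    exact mem_iUnion_cluster_of_frequently_walkOf_eq
      (hω.mono fun m hm k hk => walkOf_eq_of_forall_lt_eq hm hk)
  filter_upwards [ae_all_iff.2 hsite] with ω hω
  exact eq_univ_of_forall hω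

/-- **Proposition 1.1**: under irreducibility, almost surely the limit set
`C_∞ = ⋃ₘ C_m` of the IDLA clusters is all of `ℤ`. -/
theorem idla_fills_Z
    [MeasurableSpace Ω] (P : Measure Ω) [IsProbabilityMeasure P]
    (ξ : ℕ × ℕ → Ω → ℤ) (hiid : IsIID P ξ) (hI : HypI P ξ) :
    ∀ᵐ ω ∂P, (⋃ m : ℕ, cluster ξ ω m) = Set.univ :=
  idla_fills_Z_general P ξ hiid hI

end IDLAPaper
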